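/- Under the Markov assumption X_S − X_0 − X_T for disjoint S,T ⊆ L, for any fixed S ⊂ L the set function w : 2^S → ℝ, T ↦ I(X_T; X_0 | X_{L\S}), is submodular: w(U∪V) + w(U∩V) ≤ w(U) + w(V) for all U,V ⊆ S. -/

import Mathlib

noncomputable section
open Finset
open scoped Classical BigOperators

/-- Probability of an event under a pmf on a finite sample space. -/
def Pr {Ω : Type} [Fintype Ω] (p : Ω → ℝ) (E : Ω → Prop) : ℝ :=
  ∑ ω : Ω, if E ω then p ω else 0

/-- `p` is a probability mass function. -/
def IsPMF {Ω : Type} [Fintype Ω] (p : Ω → ℝ) : Prop :=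
  (∀ ω, 0 ≤ p ω) ∧ (∑ ω : Ω, p ω) = 1

/-- Shannon entropy of a finitely-valued random variable `X` under pmf `p`. -/
def ent {Ω α : Type} [Fintype Ω] [Fintype α] (p : Ω → ℝ) (X : Ω → α) : ℝ :=
  -∑ a : α, Pr p (fun ω => X ω = a) * Real.log (Pr p (fun ω => X ω = a))

/-- Conditional Shannon entropy `H(X|Y)`. -/
def condEnt {Ω α β : Type} [Fintype Ω] [Fintype α] [Fintype β]
    (p : Ω → ℝ) (X : Ω → α) (Y : Ω → β) : ℝ :=
  ent p (fun ω => (X ω, Y ω)) - ent p Y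

/-- Mutual information `I(X;Y)`. -/
def mi {Ω α β : Type} [Fintype Ω] [Fintype α] [Fintype β]
    (p : Ω → ℝ) (X : Ω → α) (Y : Ω → β) : ℝ :=
  ent p X + ent p Y - ent p (fun ω => (X ω, Y ω))

/-- Conditional mutual information `I(X;Y|Z)`. -/
def cmi {Ω α β γ : Type} [Fintype Ω] [Fintype α] [Fintype β] [Fintype γ]
    (p : Ω → ℝ) (X : Ω → α) (Y : Ω → β) (Z : Ω → γ) : ℝ :=
  ent p (fun ω => (X ω, Z ω)) + ent p (fun ω => (Y ω, Z ω))
    - ent p (fun ω => (X ω, Y ω, Z ω)) - ent p Z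

/-- `X` and `Y` are conditionally independent given `Z` (Markov chain `X - Z - Y`). -/
def CondIndep {Ω α β γ : Type} [Fintype Ω] [Fintype α] [Fintype β] [Fintype γ]
    (p : Ω → ℝ) (X : Ω → α) (Y : Ω → β) (Z : Ω → γ) : Prop :=
  ∀ (a : α) (b : β) (c : γ),
    Pr p (fun ω => X ω = a ∧ Y ω = b ∧ Z ω = c) * Pr p (fun ω => Z ω = c)
      = Pr p (fun ω => X ω = a ∧ Z ω = c) * Pr p (fun ω => Y ω = b ∧ Z ω = c)

/-- The tuple random variable `X_S = (X_l)_{l ∈ S}`. -/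
def XS {Ω L 𝒳 : Type} [Fintype Ω] (X : L → Ω → 𝒳) (S : Finset L) :
    Ω → (S → 𝒳) :=
  fun ω i => X i ω

/-- The value function of the secret-key generation game:
`v(S) = I(X_S; X_0 | X_{L\S})`. -/
def vGame {Ω L 𝒳 β : Type} [Fintype Ω] [Fintype L] [DecidableEq L] [Fintype 𝒳] [Fintype β]
    (p : Ω → ℝ) (X : L → Ω → 𝒳) (X0 : Ω → β) (S : Finset L) : ℝ :=
  cmi p (XS X S) X0 (XS X Sᶜ)


/-!
Write `B = Sᶜ`, `h(T) = H(X_T)` and `h₀(T) = H(X_T, X_0)`. Then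
`I(X_T; X_0 | X_B) = h(T ∪ B) - h₀(T ∪ B) + h₀(B) - h(B)`, and `T ↦ T ∪ B` preserves unions and
intersections, so it suffices that `h` is submodular and `h₀` is modular. Submodularity of `h` is
`I(X_P; X_Q | X_{P ∩ Q}) ≥ 0`. Modularity of `h₀` comes from the Markov assumption: for disjoint
`A, T` it gives `I(X_A; X_T | X_0) = 0`, i.e. `h₀(A ∪ T) + H(X_0) = h₀(A) + h₀(T)`; apply this to
`P ∪ Q = (P \ Q) ∪ Q` and to `P = (P \ Q) ∪ (P ∩ Q)` and subtract.
-/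

section Probability
variable {Ω α β : Type} [Fintype Ω] [Fintype α] [Fintype β] {p : Ω → ℝ}

lemma Pr_nonneg (hp : ∀ ω, 0 ≤ p ω) (E : Ω → Prop) : 0 ≤ Pr p E :=
  sum_nonneg fun ω _ => by split <;> simp [hp ω]

lemma Pr_congr {E F : Ω → Prop} (h : ∀ ω, E ω ↔ F ω) : Pr p E = Pr p F :=
  sum_congr rfl fun ω _ => if_congr (h ω) rfl rfl

lemma Pr_pos (hp : ∀ ω, 0 ≤ p ω) {E : Ω → Prop} {ω₀ : Ω} (hω₀ : 0 < p ω₀) (hE : E ω₀) :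
    0 < Pr p E := by
  refine hω₀.trans_le ?_
  simpa [Pr, hE] using single_le_sum (f := fun ω => if E ω then p ω else 0)
    (fun ω _ => by split <;> simp [hp ω]) (mem_univ ω₀)

lemma sum_Pr_eq_and (W : Ω → α) (E : Ω → Prop) :
    ∑ a, Pr p (fun ω => W ω = a ∧ E ω) = Pr p E := by
  unfold Pr
  rw [sum_comm]
  refine sum_congr rfl fun ω _ => ?_
  by_cases hE : E ω <;> simp [hE]

lemma sum_Pr_eq (hp : IsPMF p) (W : Ω → α) : ∑ a, Pr p (fun ω => W ω = a) = 1 := by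
  simpa [Pr, hp.2] using sum_Pr_eq_and (p := p) W fun _ => True

lemma sum_Pr_eq_mul (W : Ω → α) (g : α → ℝ) :
    ∑ a, Pr p (fun ω => W ω = a) * g a = ∑ ω, p ω * g (W ω) := by
  simp only [Pr, sum_mul, ite_mul, zero_mul]
  rw [sum_comm]
  simp

lemma ent_eq_sum (W : Ω → α) :
    ent p W = -∑ ω, p ω * Real.log (Pr p (fun ω' => W ω' = W ω)) := by
  rw [ent, sum_Pr_eq_mul W fun a => Real.log (Pr p (fun ω' => W ω' = a))]

lemma ent_congr {X : Ω → α} {Y : Ω → β} (h : ∀ ω ω', X ω' = X ω ↔ Y ω' = Y ω) :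
    ent p X = ent p Y := by
  have hfib := fun ω => Pr_congr (p := p) (h ω)
  simp only [ent_eq_sum, hfib]

end Probability

section MutualInformation
variable {Ω α β γ : Type} [Fintype Ω] {p : Ω → ℝ}

lemma mul_one_sub_condIndep_ratio_le (hp : ∀ ω, 0 ≤ p ω) (X : Ω → α) (Y : Ω → β) (Z : Ω → γ)
    (ω : Ω) :
    p ω * (1 - Pr p (fun ω' => X ω' = X ω ∧ Z ω' = Z ω)
        * Pr p (fun ω' => Y ω' = Y ω ∧ Z ω' = Z ω)
        / (Pr p (fun ω' => X ω' = X ω ∧ Y ω' = Y ω ∧ Z ω' = Z ω)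
          * Pr p (fun ω' => Z ω' = Z ω)))
      ≤ p ω * (Real.log (Pr p (fun ω' => X ω' = X ω ∧ Y ω' = Y ω ∧ Z ω' = Z ω))
        + Real.log (Pr p (fun ω' => Z ω' = Z ω))
        - Real.log (Pr p (fun ω' => X ω' = X ω ∧ Z ω' = Z ω))
        - Real.log (Pr p (fun ω' => Y ω' = Y ω ∧ Z ω' = Z ω))) := by
  rcases (hp ω).eq_or_lt with hω | hω
  · simp [← hω]
  set q := Pr p (fun ω' => X ω' = X ω ∧ Y ω' = Y ω ∧ Z ω' = Z ω)
  set r := Pr p (fun ω' => X ω' = X ω ∧ Z ω' = Z ω)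
  set s := Pr p (fun ω' => Y ω' = Y ω ∧ Z ω' = Z ω)
  set t := Pr p (fun ω' => Z ω' = Z ω)
  have hq : 0 < q := Pr_pos hp hω ⟨rfl, rfl, rfl⟩
  have hr : 0 < r := Pr_pos hp hω ⟨rfl, rfl⟩
  have hs : 0 < s := Pr_pos hp hω ⟨rfl, rfl⟩
  have ht : 0 < t := Pr_pos hp hω rfl
  refine mul_le_mul_of_nonneg_left ?_ hω.le
  have key := Real.one_sub_inv_le_log_of_pos (x := q * t / (r * s)) (by positivity)
  rwa [inv_div, Real.log_div (by positivity) (by positivity), Real.log_mul hq.ne' ht.ne',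
    Real.log_mul hr.ne' hs.ne', ← sub_sub] at key

variable [Fintype α] [Fintype β] [Fintype γ]

lemma cmi_eq_sum (X : Ω → α) (Y : Ω → β) (Z : Ω → γ) :
    cmi p X Y Z = ∑ ω, p ω *
      (Real.log (Pr p (fun ω' => X ω' = X ω ∧ Y ω' = Y ω ∧ Z ω' = Z ω))
        + Real.log (Pr p (fun ω' => Z ω' = Z ω))
        - Real.log (Pr p (fun ω' => X ω' = X ω ∧ Z ω' = Z ω))
        - Real.log (Pr p (fun ω' => Y ω' = Y ω ∧ Z ω' = Z ω))) := by
  simp only [cmi, ent_eq_sum, Prod.mk.injEq, mul_add, mul_sub, sum_add_distrib, sum_sub_distrib]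
  ring

/-- The left side is the total mass, over the support of `(X, Y, Z)`, of the distribution
`P(x, z) P(y, z) / P(z)` under which `X` and `Y` are conditionally independent given `Z`. -/
lemma sum_mul_condIndep_ratio_le_one (hp : IsPMF p) (X : Ω → α) (Y : Ω → β) (Z : Ω → γ) :
    ∑ ω, p ω * (Pr p (fun ω' => X ω' = X ω ∧ Z ω' = Z ω)
        * Pr p (fun ω' => Y ω' = Y ω ∧ Z ω' = Z ω)
        / (Pr p (fun ω' => X ω' = X ω ∧ Y ω' = Y ω ∧ Z ω' = Z ω)
          * Pr p (fun ω' => Z ω' = Z ω))) ≤ 1 := by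
  set P : α × β × γ → ℝ := fun v => Pr p (fun ω => (X ω, Y ω, Z ω) = v)
  set R : α → γ → ℝ := fun x z => Pr p (fun ω => X ω = x ∧ Z ω = z)
  set S : β → γ → ℝ := fun y z => Pr p (fun ω => Y ω = y ∧ Z ω = z)
  set T : γ → ℝ := fun z => Pr p (fun ω => Z ω = z)
  have hR : ∀ z, ∑ x, R x z = T z := fun z => sum_Pr_eq_and X _
  have hS : ∀ z, ∑ y, S y z = T z := fun z => sum_Pr_eq_and Y _
  calc _ = ∑ v, P v * (R v.1 v.2.2 * S v.2.1 v.2.2 / (P v * T v.2.2)) := by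
        rw [sum_Pr_eq_mul]
        simp only [P, R, S, T, Prod.mk.injEq]
    _ ≤ ∑ v : α × β × γ, R v.1 v.2.2 * S v.2.1 v.2.2 / T v.2.2 := by
        refine sum_le_sum fun v _ => ?_
        rcases eq_or_ne (P v) 0 with hP | hP
        · rw [hP, zero_mul]
          exact div_nonneg (mul_nonneg (Pr_nonneg hp.1 _) (Pr_nonneg hp.1 _)) (Pr_nonneg hp.1 _)
        · rw [← mul_div_assoc, mul_div_mul_left _ _ hP]
    _ = ∑ z, (∑ x, R x z) * (∑ y, S y z) / T z := by
        simp only [Fintype.sum_prod_type, sum_mul_sum, sum_div]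
        conv_rhs => rw [sum_comm]
        exact sum_congr rfl fun _ _ => sum_comm
    _ = 1 := by simp only [hR, hS, mul_self_div_self, T, sum_Pr_eq hp]

theorem cmi_nonneg (hp : IsPMF p) (X : Ω → α) (Y : Ω → β) (Z : Ω → γ) : 0 ≤ cmi p X Y Z := by
  rw [cmi_eq_sum]
  refine le_trans ?_ (sum_le_sum fun ω _ => mul_one_sub_condIndep_ratio_le hp.1 X Y Z ω)
  simp only [mul_sub, mul_one, sum_sub_distrib, hp.2, sub_nonneg]
  exact sum_mul_condIndep_ratio_le_one hp X Y Z

theorem cmi_eq_zero_of_condIndep (hp : IsPMF p) {X : Ω → α} {Y : Ω → β} {Z : Ω → γ}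
    (h : CondIndep p X Y Z) : cmi p X Y Z = 0 := by
  rw [cmi_eq_sum]
  refine sum_eq_zero fun ω _ => ?_
  rcases (hp.1 ω).eq_or_lt with hω | hω
  · rw [← hω, zero_mul]
  have hq : Pr p (fun ω' => X ω' = X ω ∧ Y ω' = Y ω ∧ Z ω' = Z ω) ≠ 0 :=
    ne_of_gt (Pr_pos hp.1 hω ⟨rfl, rfl, rfl⟩)
  have ht : Pr p (fun ω' => Z ω' = Z ω) ≠ 0 := ne_of_gt (Pr_pos hp.1 hω rfl)
  have hrs := h (X ω) (Y ω) (Z ω)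
  obtain ⟨hr, hs⟩ := mul_ne_zero_iff.mp (hrs ▸ mul_ne_zero hq ht)
  rw [← Real.log_mul hq ht, hrs, Real.log_mul hr hs]
  ring

end MutualInformation

section Tuples
variable {Ω L 𝒳 β : Type} [Fintype Ω] {p : Ω → ℝ} (X : L → Ω → 𝒳)

lemma XS_eq_XS_iff {A : Finset L} {ω ω' : Ω} :
    XS X A ω' = XS X A ω ↔ ∀ i ∈ A, X i ω' = X i ω := by
  simp [XS, funext_iff]

variable [DecidableEq L] [Fintype 𝒳] [Fintype β] (X0 : Ω → β)

lemma ent_XS_pair (A B : Finset L) :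
    ent p (fun ω => (XS X A ω, XS X B ω)) = ent p (XS X (A ∪ B)) :=
  ent_congr fun _ _ => by simp only [Prod.mk.injEq, XS_eq_XS_iff, forall_mem_union]

lemma ent_XS_pair_prod {γ : Type} [Fintype γ] (W : Ω → γ) (A B : Finset L) :
    ent p (fun ω => (XS X A ω, XS X B ω, W ω)) = ent p (fun ω => (XS X (A ∪ B) ω, W ω)) :=
  ent_congr fun _ _ => by simp only [Prod.mk.injEq, XS_eq_XS_iff, forall_mem_union, and_assoc]

theorem ent_XS_submodular (hp : IsPMF p) (P Q : Finset L) :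
    ent p (XS X (P ∪ Q)) + ent p (XS X (P ∩ Q)) ≤ ent p (XS X P) + ent p (XS X Q) := by
  have h := cmi_nonneg hp (XS X P) (XS X Q) (XS X (P ∩ Q))
  rw [cmi, ent_XS_pair_prod, ent_XS_pair, ent_XS_pair, ent_XS_pair,
    union_eq_left.2 inter_subset_left, union_eq_left.2 inter_subset_right,
    union_eq_left.2 (inter_subset_left.trans subset_union_left)] at h
  linarith

theorem ent_XS_X0_union_of_condIndep (hp : IsPMF p) {A T : Finset L}
    (h : CondIndep p (XS X A) (XS X T) X0) :
    ent p (fun ω => (XS X (A ∪ T) ω, X0 ω)) + ent p X0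
      = ent p (fun ω => (XS X A ω, X0 ω)) + ent p (fun ω => (XS X T ω, X0 ω)) := by
  have h0 := cmi_eq_zero_of_condIndep hp h
  rw [cmi, ent_XS_pair_prod] at h0
  linarith

theorem ent_XS_X0_modular (hp : IsPMF p)
    (hM : ∀ S T : Finset L, Disjoint S T → CondIndep p (XS X S) (XS X T) X0) (P Q : Finset L) :
    ent p (fun ω => (XS X (P ∪ Q) ω, X0 ω)) + ent p (fun ω => (XS X (P ∩ Q) ω, X0 ω))
      = ent p (fun ω => (XS X P ω, X0 ω)) + ent p (fun ω => (XS X Q ω, X0 ω)) := by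
  have hunion := ent_XS_X0_union_of_condIndep X X0 hp (hM _ _ (sdiff_disjoint (s := Q) (t := P)))
  have hinter := ent_XS_X0_union_of_condIndep X X0 hp (hM _ _ (disjoint_sdiff_inter P Q))
  rw [sdiff_union_self_eq_union] at hunion
  rw [sdiff_union_inter] at hinter
  linarith

lemma cmi_XS_X0_XS (T B : Finset L) :
    cmi p (XS X T) X0 (XS X B) = ent p (XS X (T ∪ B)) - ent p (fun ω => (XS X (T ∪ B) ω, X0 ω))
      + ent p (fun ω => (XS X B ω, X0 ω)) - ent p (XS X B) := by
  have hswap : ent p (fun ω => (X0 ω, XS X B ω)) = ent p (fun ω => (XS X B ω, X0 ω)) :=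
    ent_congr fun _ _ => by simp only [Prod.mk.injEq, and_comm]
  have htriple : ent p (fun ω => (XS X T ω, X0 ω, XS X B ω))
      = ent p (fun ω => (XS X (T ∪ B) ω, X0 ω)) :=
    ent_congr fun _ _ => by
      simp only [Prod.mk.injEq, XS_eq_XS_iff, forall_mem_union, and_assoc, and_comm (a := X0 _ = X0 _)]
  rw [cmi, ent_XS_pair, hswap, htriple]
  ring

end Tuples

theorem statement16_general {Ω L 𝒳 β : Type} [Fintype Ω] [Fintype L] [DecidableEq L] [Fintype 𝒳] [Fintype β]
    (p : Ω → ℝ) (hp : IsPMF p) (X : L → Ω → 𝒳) (X0 : Ω → β)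
    (hM : ∀ S T : Finset L, Disjoint S T → CondIndep p (XS X S) (XS X T) X0)
    (S : Finset L) :
    ∀ U V : Finset L, U ⊆ S → V ⊆ S →
      cmi p (XS X (U ∪ V)) X0 (XS X Sᶜ) + cmi p (XS X (U ∩ V)) X0 (XS X Sᶜ)
        ≤ cmi p (XS X U) X0 (XS X Sᶜ) + cmi p (XS X V) X0 (XS X Sᶜ) := by
  intro U V _ _
  have hent := ent_XS_submodular X hp (U ∪ Sᶜ) (V ∪ Sᶜ)
  have hent0 := ent_XS_X0_modular X X0 hp hM (U ∪ Sᶜ) (V ∪ Sᶜ)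
  rw [← union_union_distrib_right, ← inter_union_distrib_right] at hent hent0
  simp only [cmi_XS_X0_XS]
  linarith

/-- under the Markov assumption, for fixed `S ⊂ L`, the set function
`w : 2^S → ℝ, T ↦ I(X_T; X_0 | X_{S^c})` is submodular. -/
theorem statement16 {Ω L 𝒳 β : Type} [Fintype Ω] [Fintype L] [DecidableEq L] [Fintype 𝒳] [Fintype β]
    (p : Ω → ℝ) (hp : IsPMF p) (X : L → Ω → 𝒳) (X0 : Ω → β)
    (hM : ∀ S T : Finset L, Disjoint S T → CondIndep p (XS X S) (XS X T) X0)
    (S : Finset L) (hS : S ⊂ Finset.univ) :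
    ∀ U V : Finset L, U ⊆ S → V ⊆ S →
      cmi p (XS X (U ∪ V)) X0 (XS X Sᶜ) + cmi p (XS X (U ∩ V)) X0 (XS X Sᶜ)
        ≤ cmi p (XS X U) X0 (XS X Sᶜ) + cmi p (XS X V) X0 (XS X Sᶜ) :=
  statement16_general p hp X X0 hM S
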